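/- arXiv:1310.7796 — 3 statements merged into one kernel-verified Lean document; each statement's English description precedes it below -/
import Mathlib

section
/- Let γ be a standard Gaussian vector in R^p, u ∈ R^p, a ∈ R^p a unit vector, and z > 0. Then E[|γᵀa|² · 1{‖γ - u‖ ≥ z}] ≤ (2 + |uᵀa|²) · exp(-z²/4 + p/2 + ‖u‖²/2). -/
/-!
On the event `‖γ - u‖ ≥ z` the weight `exp ((‖γ - u‖² - z²) / 4)` is at least one, so the
truncated second moment is at most `e^{-z²/4} E[(γᵀa)² e^{‖γ - u‖²/4}]`. Coordinatewise,
`e^{(t - c)²/4}` times the standard Gaussian density is `√2 e^{c²/2}` times the density of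
`N(-c, 2)`, so this expectation is `2^{p/2} e^{‖u‖²/2}` times the second moment
`(uᵀa)² + 2‖a‖²` of `γᵀa` for `γ ~ N(-u, 2 I)`. It remains to use `√2 ≤ e^{1/2}`.
-/

open MeasureTheory ProbabilityTheory Real
open scoped NNReal ENNReal

namespace MeasureTheory

variable {ι : Type*} [Fintype ι] {α : ι → Type*} [∀ i, MeasurableSpace (α i)]
  {μ : ∀ i, Measure (α i)} [∀ i, IsProbabilityMeasure (μ i)]

theorem lintegral_fintype_prod_eq_prod {f : ∀ i, α i → ℝ≥0∞} (hf : ∀ i, Measurable (f i)) :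
    ∫⁻ x, ∏ i, f i (x i) ∂Measure.pi μ = ∏ i, ∫⁻ t, f i t ∂μ i := by
  refine (lintegral_prod_eq_prod_lintegral_of_indepFun Finset.univ
    (fun i (x : ∀ j, α j) ↦ f i (x i)) (iIndepFun_pi fun i ↦ (hf i).aemeasurable)
    fun i ↦ (hf i).comp (measurable_pi_apply i)).trans ?_
  exact Finset.prod_congr rfl fun i _ ↦ (measurePreserving_eval μ i).lintegral_comp (hf i)

theorem Measure.pi_eq_withDensity_prod {ν : ∀ i, Measure (α i)} [∀ i, SigmaFinite (ν i)]
    {f : ∀ i, α i → ℝ≥0∞} (hf : ∀ i, Measurable (f i))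
    (hν : ∀ i, ν i = (μ i).withDensity (f i)) :
    Measure.pi ν = (Measure.pi μ).withDensity fun x ↦ ∏ i, f i (x i) := by
  refine Measure.pi_eq fun s hs ↦ ?_
  rw [withDensity_apply _ (MeasurableSet.univ_pi hs),
    ← lintegral_indicator (MeasurableSet.univ_pi hs)]
  have hind : (Set.univ.pi s).indicator (fun x ↦ ∏ i, f i (x i)) =
      fun x ↦ ∏ i, (s i).indicator (f i) (x i) := by
    ext x
    by_cases hx : x ∈ Set.univ.pi s
    · rw [Set.indicator_of_mem hx]
      exact Finset.prod_congr rfl fun i _ ↦ (Set.indicator_of_mem (hx i (Set.mem_univ i)) _).symm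
    · rw [Set.indicator_of_notMem hx]
      obtain ⟨i, hi⟩ : ∃ i, x i ∉ s i := by simpa [Set.mem_univ_pi] using hx
      exact (Finset.prod_eq_zero (Finset.mem_univ i) (Set.indicator_of_notMem hi _)).symm
  rw [hind, lintegral_fintype_prod_eq_prod fun i ↦ (hf i).indicator (hs i)]
  exact Finset.prod_congr rfl fun i _ ↦ by
    rw [hν i, withDensity_apply _ (hs i), lintegral_indicator (hs i)]

end MeasureTheory

section LinearForm

variable {ι : Type*} [Fintype ι] {μ : ι → Measure ℝ} [∀ i, IsProbabilityMeasure (μ i)]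

theorem memLp_sum_mul_pi (hμ : ∀ i, MemLp id 2 (μ i)) (a : ι → ℝ) :
    MemLp (fun x : ι → ℝ ↦ ∑ i, x i * a i) 2 (Measure.pi μ) :=
  memLp_finsetSum _ fun i _ ↦
    ((hμ i).mul_const (a i)).comp_measurePreserving (measurePreserving_eval μ i)

theorem integral_sq_sum_mul_pi (hμ : ∀ i, MemLp id 2 (μ i)) (a : ι → ℝ) :
    ∫ x, (∑ i, x i * a i) ^ 2 ∂Measure.pi μ =
      (∑ i, (∫ t, t ∂μ i) * a i) ^ 2 + ∑ i, Var[id; μ i] * a i ^ 2 := by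
  have hvar : Var[fun x : ι → ℝ ↦ ∑ i, x i * a i; Measure.pi μ] =
      ∑ i, Var[id; μ i] * a i ^ 2 := by
    have := variance_sum_pi fun i ↦ (hμ i).mul_const (a i)
    simp only [Finset.sum_fn, variance_mul_const] at this
    exact this
  have hmean : ∫ x, ∑ i, x i * a i ∂Measure.pi μ = ∑ i, (∫ t, t ∂μ i) * a i := by
    rw [integral_finsetSum _ fun i _ ↦ integrable_comp_eval (μ := μ) (f := fun t ↦ t * a i)
      (((hμ i).mul_const (a i)).integrable one_le_two)]
    exact Finset.sum_congr rfl fun i _ ↦ by rw [integral_mul_const, integral_eval]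
  rw [variance_eq_sub (memLp_sum_mul_pi hμ a), Pi.pow_def] at hvar
  rw [← hmean]
  linarith

end LinearForm

theorem integral_sq_sum_mul_pi_gaussianReal {ι : Type*} [Fintype ι] (m : ι → ℝ) (v : ι → ℝ≥0)
    (a : ι → ℝ) :
    ∫ x, (∑ i, x i * a i) ^ 2 ∂Measure.pi (fun i ↦ gaussianReal (m i) (v i)) =
      (∑ i, m i * a i) ^ 2 + ∑ i, v i * a i ^ 2 := by
  simp only [integral_sq_sum_mul_pi (fun i ↦ memLp_id_gaussianReal 2) a, integral_id_gaussianReal,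
    variance_id_gaussianReal]

theorem gaussianReal_eq_withDensity_gaussianPDFReal_div (m m₀ : ℝ) {v v₀ : ℝ≥0} (hv : v ≠ 0)
    (hv₀ : v₀ ≠ 0) :
    gaussianReal m v = (gaussianReal m₀ v₀).withDensity
      fun t ↦ ENNReal.ofReal (gaussianPDFReal m v t / gaussianPDFReal m₀ v₀ t) := by
  rw [gaussianReal_of_var_ne_zero _ hv, gaussianReal_of_var_ne_zero _ hv₀,
    ← withDensity_mul _ (measurable_gaussianPDF _ _) (by fun_prop)]
  congr 1
  ext t
  simp only [Pi.mul_apply, gaussianPDF]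
  rw [← ENNReal.ofReal_mul (gaussianPDFReal_nonneg _ _ _),
    mul_div_cancel₀ _ (gaussianPDFReal_pos _ _ _ hv₀).ne']

section ChangeOfMeasure

variable {ι : Type*} [Fintype ι] {m : ι → ℝ} {v : ι → ℝ≥0} (m₀ : ι → ℝ) {v₀ : ι → ℝ≥0}

theorem pi_gaussianReal_eq_withDensity (hv : ∀ i, v i ≠ 0) (hv₀ : ∀ i, v₀ i ≠ 0) :
    Measure.pi (fun i ↦ gaussianReal (m i) (v i)) =
      (Measure.pi fun i ↦ gaussianReal (m₀ i) (v₀ i)).withDensity fun x ↦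
        ∏ i, ENNReal.ofReal (gaussianPDFReal (m i) (v i) (x i) /
          gaussianPDFReal (m₀ i) (v₀ i) (x i)) := by
  refine Measure.pi_eq_withDensity_prod (f := fun i t ↦
      ENNReal.ofReal (gaussianPDFReal (m i) (v i) t / gaussianPDFReal (m₀ i) (v₀ i) t))
    (fun i ↦ ?_) fun i ↦ gaussianReal_eq_withDensity_gaussianPDFReal_div _ _ (hv i) (hv₀ i)
  exact ((measurable_gaussianPDFReal _ _).div (measurable_gaussianPDFReal _ _)).ennreal_ofReal

theorem toReal_prod_ofReal_gaussianPDFReal_div (x : ι → ℝ) :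
    (∏ i, ENNReal.ofReal (gaussianPDFReal (m i) (v i) (x i) /
      gaussianPDFReal (m₀ i) (v₀ i) (x i))).toReal =
      ∏ i, gaussianPDFReal (m i) (v i) (x i) / gaussianPDFReal (m₀ i) (v₀ i) (x i) := by
  rw [ENNReal.toReal_prod]
  exact Finset.prod_congr rfl fun i _ ↦
    ENNReal.toReal_ofReal (div_nonneg (gaussianPDFReal_nonneg _ _ _) (gaussianPDFReal_nonneg _ _ _))

theorem integrable_pi_gaussianReal_iff (hv : ∀ i, v i ≠ 0) (hv₀ : ∀ i, v₀ i ≠ 0)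
    {g : (ι → ℝ) → ℝ} :
    Integrable g (Measure.pi fun i ↦ gaussianReal (m i) (v i)) ↔
      Integrable (fun x ↦ (∏ i, gaussianPDFReal (m i) (v i) (x i) /
        gaussianPDFReal (m₀ i) (v₀ i) (x i)) * g x)
        (Measure.pi fun i ↦ gaussianReal (m₀ i) (v₀ i)) := by
  rw [pi_gaussianReal_eq_withDensity m₀ hv hv₀, integrable_withDensity_iff_integrable_smul'
    (by fun_prop) (ae_of_all _ fun x ↦ ENNReal.prod_lt_top fun i _ ↦ ENNReal.ofReal_lt_top)]
  simp only [toReal_prod_ofReal_gaussianPDFReal_div, smul_eq_mul]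

theorem integral_pi_gaussianReal_eq (hv : ∀ i, v i ≠ 0) (hv₀ : ∀ i, v₀ i ≠ 0)
    (g : (ι → ℝ) → ℝ) :
    ∫ x, g x ∂Measure.pi (fun i ↦ gaussianReal (m i) (v i)) =
      ∫ x, (∏ i, gaussianPDFReal (m i) (v i) (x i) / gaussianPDFReal (m₀ i) (v₀ i) (x i)) * g x
        ∂Measure.pi fun i ↦ gaussianReal (m₀ i) (v₀ i) := by
  rw [pi_gaussianReal_eq_withDensity m₀ hv hv₀, integral_withDensity_eq_integral_toReal_smul
    (by fun_prop) (ae_of_all _ fun x ↦ ENNReal.prod_lt_top fun i _ ↦ ENNReal.ofReal_lt_top)]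
  simp only [toReal_prod_ofReal_gaussianPDFReal_div, smul_eq_mul]

end ChangeOfMeasure

theorem exp_sq_sub_div_four_eq (c t : ℝ) :
    rexp ((t - c) ^ 2 / 4) =
      √2 * rexp (c ^ 2 / 2) * (gaussianPDFReal (-c) 2 t / gaussianPDFReal 0 1 t) := by
  simp only [gaussianPDFReal]
  have h2 : √(2 * π * (2 : ℝ≥0)) = √2 * √(2 * π * (1 : ℝ≥0)) := by
    push_cast; rw [← sqrt_mul zero_le_two]; ring_nf
  rw [h2, mul_inv]
  field_simp
  rw [← exp_add, ← exp_add]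
  congr 1
  push_cast
  ring

theorem exp_sum_sq_sub_div_four_eq {ι : Type*} [Fintype ι] (c x : ι → ℝ) :
    rexp ((∑ i, (x i - c i) ^ 2) / 4) = √2 ^ Fintype.card ι * rexp ((∑ i, c i ^ 2) / 2) *
      ∏ i, gaussianPDFReal (-c i) 2 (x i) / gaussianPDFReal 0 1 (x i) := by
  simp only [Finset.sum_div, exp_sum, exp_sq_sub_div_four_eq, Finset.prod_mul_distrib,
    Finset.prod_const, Finset.card_univ]

section TiltedMoment

variable {ι : Type*} [Fintype ι] (u a : ι → ℝ)

theorem sq_sum_mul_mul_exp_eq (x : ι → ℝ) :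
    (∑ i, x i * a i) ^ 2 * rexp ((∑ i, (x i - u i) ^ 2) / 4) =
      √2 ^ Fintype.card ι * rexp ((∑ i, u i ^ 2) / 2) *
        ((∏ i, gaussianPDFReal (-u i) 2 (x i) / gaussianPDFReal 0 1 (x i)) *
          (∑ i, x i * a i) ^ 2) := by
  rw [exp_sum_sq_sub_div_four_eq]
  ring

theorem integrable_sq_sum_mul_mul_exp :
    Integrable (fun x ↦ (∑ i, x i * a i) ^ 2 * rexp ((∑ i, (x i - u i) ^ 2) / 4))
      (Measure.pi fun _ : ι ↦ gaussianReal 0 1) := by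
  simp only [sq_sum_mul_mul_exp_eq]
  refine Integrable.const_mul ?_ _
  exact (integrable_pi_gaussianReal_iff (fun _ ↦ 0) (fun _ ↦ two_ne_zero)
    (fun _ ↦ one_ne_zero)).1 (memLp_sum_mul_pi (fun _ ↦ memLp_id_gaussianReal 2) a).integrable_sq

theorem integral_sq_sum_mul_mul_exp :
    ∫ x, (∑ i, x i * a i) ^ 2 * rexp ((∑ i, (x i - u i) ^ 2) / 4)
        ∂Measure.pi (fun _ : ι ↦ gaussianReal 0 1) =
      √2 ^ Fintype.card ι * rexp ((∑ i, u i ^ 2) / 2) *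
        ((∑ i, u i * a i) ^ 2 + 2 * ∑ i, a i ^ 2) := by
  simp only [sq_sum_mul_mul_exp_eq, integral_const_mul]
  rw [← integral_pi_gaussianReal_eq (fun _ ↦ 0) (fun _ ↦ two_ne_zero) (fun _ ↦ one_ne_zero),
    integral_sq_sum_mul_pi_gaussianReal]
  simp [Finset.mul_sum]

end TiltedMoment

theorem sqrt_two_pow_le_exp (n : ℕ) : √2 ^ n ≤ rexp (n / 2) := by
  have h : √2 ≤ rexp (1 / 2) := by
    rw [sqrt_le_left (exp_pos _).le, ← exp_nat_mul, show ((2 : ℕ) : ℝ) * (1 / 2) = 1 by norm_num]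
    linarith [add_one_le_exp (1 : ℝ)]
  calc √2 ^ n ≤ rexp (1 / 2) ^ n := pow_le_pow_left₀ (sqrt_nonneg 2) h n
    _ = rexp (n / 2) := by rw [← exp_nat_mul]; ring_nf

theorem setIntegral_le_integral_mul_of_one_le {α : Type*} [MeasurableSpace α] {μ : Measure α}
    {s : Set α} {f w : α → ℝ} (hs : MeasurableSet s) (hf : AEStronglyMeasurable f μ)
    (hf₀ : ∀ x, 0 ≤ f x) (hw₀ : ∀ x, 0 ≤ w x) (hw : ∀ x ∈ s, 1 ≤ w x)
    (hfw : Integrable (fun x ↦ f x * w x) μ) :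
    ∫ x in s, f x ∂μ ≤ ∫ x, f x * w x ∂μ := by
  have hle : ∀ x ∈ s, f x ≤ f x * w x := fun x hx ↦ le_mul_of_one_le_right (hf₀ x) (hw x hx)
  have hfs : IntegrableOn f s μ := hfw.integrableOn.mono' hf.restrict <|
    ae_restrict_of_forall_mem hs fun x hx ↦ by rw [norm_of_nonneg (hf₀ x)]; exact hle x hx
  calc ∫ x in s, f x ∂μ ≤ ∫ x in s, f x * w x ∂μ := setIntegral_mono_on hfs hfw.integrableOn hs hle
    _ ≤ ∫ x, f x * w x ∂μ :=
      setIntegral_le_integral hfw (ae_of_all _ fun x ↦ mul_nonneg (hf₀ x) (hw₀ x))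

/-- For a standard Gaussian vector `γ` in `ℝ^p`, a unit vector `a`, `u ∈ ℝ^p` and `z > 0`,
`E[|γᵀa|² 1{‖γ - u‖ ≥ z}] ≤ (2 + |uᵀa|²) exp(-z²/4 + p/2 + ‖u‖²/2)`. -/
theorem gauss_quad_tail_bound (p : ℕ) (u a : Fin p → ℝ) (ha : ∑ i, a i ^ 2 = 1)
    (z : ℝ) (hz : 0 < z) :
    ∫ x in {x : Fin p → ℝ | z ≤ Real.sqrt (∑ i, (x i - u i) ^ 2)},
        (∑ i, x i * a i) ^ 2 ∂(Measure.pi fun _ : Fin p => gaussianReal 0 1) ≤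
      (2 + (∑ i, u i * a i) ^ 2) * Real.exp (-z ^ 2 / 4 + p / 2 + (∑ i, u i ^ 2) / 2) := by
  have hone : ∀ x ∈ {x : Fin p → ℝ | z ≤ Real.sqrt (∑ i, (x i - u i) ^ 2)},
      1 ≤ rexp ((∑ i, (x i - u i) ^ 2) / 4) * rexp (-z ^ 2 / 4) := fun x hx ↦ by
    have hsq : z ^ 2 ≤ ∑ i, (x i - u i) ^ 2 := (le_sqrt' hz).1 hx
    rw [← exp_add]
    exact one_le_exp (by linarith)
  calc _ ≤ ∫ x, (∑ i, x i * a i) ^ 2 * (rexp ((∑ i, (x i - u i) ^ 2) / 4) * rexp (-z ^ 2 / 4))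
          ∂(Measure.pi fun _ : Fin p => gaussianReal 0 1) :=
        setIntegral_le_integral_mul_of_one_le (measurableSet_le (by fun_prop) (by fun_prop))
          (Measurable.aestronglyMeasurable (by fun_prop)) (fun _ ↦ sq_nonneg _)
          (fun _ ↦ by positivity) hone
          (by simpa only [mul_assoc] using (integrable_sq_sum_mul_mul_exp u a).mul_const _)
    _ = (rexp (-z ^ 2 / 4) * rexp ((∑ i, u i ^ 2) / 2) * (2 + (∑ i, u i * a i) ^ 2)) *
          √2 ^ p := by
      simp only [← mul_assoc, integral_mul_const, integral_sq_sum_mul_mul_exp, ha,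
        Fintype.card_fin]
      ring
    _ ≤ (rexp (-z ^ 2 / 4) * rexp ((∑ i, u i ^ 2) / 2) * (2 + (∑ i, u i * a i) ^ 2)) *
          rexp (p / 2) := by
      gcongr
      exact sqrt_two_pow_le_exp p
    _ = _ := by
      rw [exp_add, exp_add]
      ring
end

section
/- Let D² be a symmetric positive definite p*×p* block matrix with blocks D²_θθ = D₀², off-diagonal A₀, and D²_ηη = H₀², and suppose ‖D₀⁻¹ A₀ H₀⁻² A₀ᵀ D₀⁻¹‖_op ≤ ν < 1. Then the efficient Fisher information D̆₀² := D₀² - A₀H₀⁻²A₀ᵀ is positive definite and satisfies (1-ν)D₀² ≤ D̆₀² ≤ D₀². -/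
open Matrix

/-!
The efficient information is the Schur complement `D₀² - M` with `M = A₀H₀⁻²A₀ᵀ ≥ 0`, so
`D̆₀² ≤ D₀²` is immediate. By Cauchy–Schwarz, the operator-norm bound on
`B = D₀⁻¹MD₀⁻¹` gives `B ≤ ν • 1`; conjugating by the symmetric invertible `D₀` turns this
into `M ≤ ν D₀²`, which is the lower bound, and `ν < 1` makes `D̆₀² ≥ (1 - ν) D₀²` positive definite.
-/

namespace Matrix

variable {n : Type*} [Fintype n]

lemma dotProduct_mulVec_le_of_norm_mulVec_le {B : Matrix n n ℝ} {ν : ℝ}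
    (hnorm : ∀ v : n → ℝ, √(∑ i, (B *ᵥ v) i ^ 2) ≤ ν * √(∑ i, v i ^ 2)) (x : n → ℝ) :
    x ⬝ᵥ B *ᵥ x ≤ ν * (x ⬝ᵥ x) :=
  calc x ⬝ᵥ B *ᵥ x ≤ √(∑ i, x i ^ 2) * √(∑ i, (B *ᵥ x) i ^ 2) :=
        Real.sum_mul_le_sqrt_mul_sqrt _ _ _
    _ ≤ √(∑ i, x i ^ 2) * (ν * √(∑ i, x i ^ 2)) := by gcongr; exact hnorm x
    _ = ν * (x ⬝ᵥ x) := by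
        rw [mul_left_comm, Real.mul_self_sqrt (by positivity)]
        simp only [dotProduct, sq]

variable [DecidableEq n]

lemma posSemidef_smul_one_sub_of_norm_mulVec_le {B : Matrix n n ℝ} (hB : B.IsHermitian)
    {ν : ℝ} (hnorm : ∀ v : n → ℝ, √(∑ i, (B *ᵥ v) i ^ 2) ≤ ν * √(∑ i, v i ^ 2)) :
    (ν • 1 - B).PosSemidef := by
  refine .of_dotProduct_mulVec_nonneg ((isHermitian_one.smul (.all ν)).sub hB) fun x => ?_
  rw [star_trivial, sub_mulVec, smul_mulVec, one_mulVec, dotProduct_sub, dotProduct_smul,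
    smul_eq_mul, sub_nonneg]
  exact dotProduct_mulVec_le_of_norm_mulVec_le hnorm x

lemma IsSymm.smul_mul_self_sub_eq_conj {D : Matrix n n ℝ} (hD : D.IsSymm) (hDu : IsUnit D)
    (M : Matrix n n ℝ) (ν : ℝ) :
    ν • (D * D) - M = star D * (ν • 1 - D⁻¹ * M * D⁻¹) * D := by
  have hstar : star D = D := by
    rw [star_eq_conjTranspose, conjTranspose_eq_transpose_of_trivial, hD.eq]
  rw [hstar, Matrix.mul_sub, Matrix.sub_mul, Matrix.mul_smul, Matrix.smul_mul, Matrix.mul_one,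
    ← Matrix.mul_assoc, ← Matrix.mul_assoc, mul_nonsing_inv _ ((isUnit_iff_isUnit_det D).1 hDu),
    Matrix.one_mul, Matrix.mul_assoc, nonsing_inv_mul _ ((isUnit_iff_isUnit_det D).1 hDu),
    Matrix.mul_one]

lemma IsSymm.posDef_mul_self {D : Matrix n n ℝ} (hD : D.IsSymm) (hDu : IsUnit D) :
    (D * D).PosDef := by
  simpa [star_eq_conjTranspose, hD.eq] using hDu.posDef_star_left_conjugate_iff.2 PosDef.one

lemma posSemidef_smul_mul_self_sub_of_norm_mulVec_le {D M : Matrix n n ℝ} (hD : D.IsSymm)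
    (hDu : IsUnit D) (hM : M.IsHermitian) {ν : ℝ}
    (hop : ∀ v : n → ℝ, √(∑ i, ((D⁻¹ * M * D⁻¹) *ᵥ v) i ^ 2) ≤ ν * √(∑ i, v i ^ 2)) :
    (ν • (D * D) - M).PosSemidef := by
  rw [hD.smul_mul_self_sub_eq_conj hDu]
  refine hDu.posSemidef_star_left_conjugate_iff.2
    (posSemidef_smul_one_sub_of_norm_mulVec_le ?_ hop)
  simpa [hD.inv.eq, Matrix.mul_assoc] using isHermitian_mul_mul_conjTranspose D⁻¹ hM

end Matrix

theorem efficient_fisher_posdef_general (p q : ℕ)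
    (D0sq : Matrix (Fin p) (Fin p) ℝ) (A0 : Matrix (Fin p) (Fin q) ℝ)
    (H0sq : Matrix (Fin q) (Fin q) ℝ)
    (D0 : Matrix (Fin p) (Fin p) ℝ) (hD0symm : D0.IsSymm) (hD0pos : D0.PosDef)
    (hD0sq : D0 * D0 = D0sq) (hH : H0sq.PosDef)
    (ν : ℝ) (hν : ν < 1)
    (hop : ∀ v : Fin p → ℝ,
      Real.sqrt (∑ i, ((D0⁻¹ * A0 * H0sq⁻¹ * A0ᵀ * D0⁻¹).mulVec v) i ^ 2) ≤
        ν * Real.sqrt (∑ i, v i ^ 2)) :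
    (D0sq - A0 * H0sq⁻¹ * A0ᵀ).PosDef ∧
    ((D0sq - A0 * H0sq⁻¹ * A0ᵀ) - (1 - ν) • D0sq).PosSemidef ∧
    (D0sq - (D0sq - A0 * H0sq⁻¹ * A0ᵀ)).PosSemidef := by
  set M := A0 * H0sq⁻¹ * A0ᵀ
  have hM : M.PosSemidef := by
    simpa using hH.inv.posSemidef.mul_mul_conjTranspose_same A0
  have hB : D0⁻¹ * A0 * H0sq⁻¹ * A0ᵀ * D0⁻¹ = D0⁻¹ * M * D0⁻¹ := by
    simp only [M, Matrix.mul_assoc]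
  have hMle : (ν • D0sq - M).PosSemidef := by
    rw [← hD0sq]
    exact posSemidef_smul_mul_self_sub_of_norm_mulVec_le hD0symm hD0pos.isUnit hM.isHermitian
      (hB ▸ hop)
  have hD0sqpos : D0sq.PosDef := hD0sq ▸ hD0symm.posDef_mul_self hD0pos.isUnit
  refine ⟨?_, ?_, by rwa [sub_sub_cancel]⟩
  · have hsplit : D0sq - M = (1 - ν) • D0sq + (ν • D0sq - M) := by module
    rw [hsplit]
    exact (hD0sqpos.smul (sub_pos.2 hν)).add_posSemidef hMle
  · have hsplit : D0sq - M - (1 - ν) • D0sq = ν • D0sq - M := by module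
    rwa [hsplit]

/-- If the full Fisher information block matrix is positive definite and the angle condition
`‖D₀⁻¹A₀H₀⁻²A₀ᵀD₀⁻¹‖_op ≤ ν < 1` holds, then the efficient Fisher information
`D̆₀² = D₀² - A₀H₀⁻²A₀ᵀ` is positive definite and `(1-ν)D₀² ≤ D̆₀² ≤ D₀²` in the Loewner order. -/
theorem efficient_fisher_posdef (p q : ℕ)
    (D0sq : Matrix (Fin p) (Fin p) ℝ) (A0 : Matrix (Fin p) (Fin q) ℝ)
    (H0sq : Matrix (Fin q) (Fin q) ℝ)
    (D0 : Matrix (Fin p) (Fin p) ℝ) (hD0symm : D0.IsSymm) (hD0pos : D0.PosDef)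
    (hD0sq : D0 * D0 = D0sq) (hH : H0sq.PosDef)
    (hfull : (Matrix.fromBlocks D0sq A0 A0ᵀ H0sq).PosDef)
    (ν : ℝ) (hν : ν < 1)
    (hop : ∀ v : Fin p → ℝ,
      Real.sqrt (∑ i, ((D0⁻¹ * A0 * H0sq⁻¹ * A0ᵀ * D0⁻¹).mulVec v) i ^ 2) ≤
        ν * Real.sqrt (∑ i, v i ^ 2)) :
    (D0sq - A0 * H0sq⁻¹ * A0ᵀ).PosDef ∧
    ((D0sq - A0 * H0sq⁻¹ * A0ᵀ) - (1 - ν) • D0sq).PosSemidef ∧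
    (D0sq - (D0sq - A0 * H0sq⁻¹ * A0ᵀ)).PosSemidef :=
  efficient_fisher_posdef_general p q D0sq A0 H0sq D0 hD0symm hD0pos hD0sq hH ν hν hop
end

section
/- Suppose d'' is L-Lipschitz on R, D₀² = Σ_i d''(Ψ_iᵀυ*)Ψ_iΨ_iᵀ is positive definite, and define N₂^{-1/2} = max_i sup_γ |Ψ_iᵀγ| / (d''(Ψ_iᵀυ*)·‖D₀γ‖). Then for every υ with ‖D₀(υ - υ*)‖ ≤ r, ‖D₀⁻¹(D²(υ) - D₀²)D₀⁻¹‖_op ≤ L·r/N₂^{1/2}, where D²(υ) = Σ_i d''(Ψ_iᵀυ)Ψ_iΨ_iᵀ. -/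
open Matrix

lemma bilin_sum {n p : ℕ} (Ψ : Fin n → Fin p → ℝ) (δ : Fin n → ℝ) (a b : Fin p → ℝ) :
    a ⬝ᵥ (∑ i, δ i • Matrix.vecMulVec (Ψ i) (Ψ i)).mulVec b
      = ∑ i, δ i * (Ψ i ⬝ᵥ a) * (Ψ i ⬝ᵥ b) := by
  simp only [Matrix.mulVec, dotProduct, Matrix.sum_apply, Matrix.smul_apply,
    Matrix.vecMulVec_apply, smul_eq_mul, Finset.sum_mul, Finset.mul_sum]
  calc ∑ x : Fin p, ∑ y : Fin p, ∑ i : Fin n, a x * (δ i * (Ψ i x * Ψ i y) * b y)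
      = ∑ x : Fin p, ∑ i : Fin n, ∑ y : Fin p, a x * (δ i * (Ψ i x * Ψ i y) * b y) :=
        Finset.sum_congr rfl fun x _ => Finset.sum_comm
    _ = ∑ i : Fin n, ∑ x : Fin p, ∑ y : Fin p, a x * (δ i * (Ψ i x * Ψ i y) * b y) :=
        Finset.sum_comm
    _ = ∑ i : Fin n, ∑ y : Fin p, ∑ x : Fin p, δ i * (Ψ i x * a x) * (Ψ i y * b y) := by
        refine Finset.sum_congr rfl fun i _ => ?_
        rw [Finset.sum_comm]
        exact Finset.sum_congr rfl fun y _ => Finset.sum_congr rfl fun x _ => by ring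

/-- Lemma `expectApproxGlm`: if `d''` is `L`-Lipschitz and `‖D₀(υ - υ*)‖ ≤ r`, then
`‖D₀⁻¹(D²(υ) - D₀²)D₀⁻¹‖_op ≤ L r / N₂^{1/2}` where `D²(υ) = Σᵢ d''(Ψᵢᵀυ)ΨᵢΨᵢᵀ` and
`N₂^{-1/2} = maxᵢ sup_γ |Ψᵢᵀγ|/(d''(Ψᵢᵀυ*)‖D₀γ‖)`. -/
theorem glm_hessian_approx (n p : ℕ) (Ψ : Fin n → Fin p → ℝ) (d : ℝ → ℝ) (L : ℝ)
    (hL : ∀ z z0 : ℝ, |deriv (deriv d) z - deriv (deriv d) z0| ≤ L * |z - z0|)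
    (υs : Fin p → ℝ)
    (D0 : Matrix (Fin p) (Fin p) ℝ) (hD0symm : D0.IsSymm) (hD0pos : D0.PosDef)
    (hD0sq : D0 * D0 = ∑ i, deriv (deriv d) (Ψ i ⬝ᵥ υs) • Matrix.vecMulVec (Ψ i) (Ψ i))
    (sN2 : ℝ)  -- `sN2 = N₂^{-1/2}`
    (hN2 : ∀ i (γ : Fin p → ℝ), |Ψ i ⬝ᵥ γ| ≤
      sN2 * deriv (deriv d) (Ψ i ⬝ᵥ υs) * Real.sqrt (∑ j, (D0.mulVec γ) j ^ 2))
    (r : ℝ) (υ : Fin p → ℝ)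
    (hloc : Real.sqrt (∑ j, (D0.mulVec (υ - υs)) j ^ 2) ≤ r) :
    ∀ v : Fin p → ℝ,
      Real.sqrt (∑ j, ((D0⁻¹ *
          ((∑ i, deriv (deriv d) (Ψ i ⬝ᵥ υ) • Matrix.vecMulVec (Ψ i) (Ψ i)) - D0 * D0) *
          D0⁻¹).mulVec v) j ^ 2) ≤
        L * r * sN2 * Real.sqrt (∑ j, v j ^ 2) := by
  intro v
  rcases Nat.eq_zero_or_pos p with hp | hp
  · subst hp
    simp
  set c : Fin n → ℝ := fun i => deriv (deriv d) (Ψ i ⬝ᵥ υs) with hc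
  set e : Fin n → ℝ := fun i => deriv (deriv d) (Ψ i ⬝ᵥ υ) with he
  -- basic positivity facts
  have hr0 : (0:ℝ) ≤ r := le_trans (Real.sqrt_nonneg _) hloc
  have hL0 : (0:ℝ) ≤ L := by
    have := hL 1 0
    simp at this
    exact le_trans (abs_nonneg _) this
  have hdet : IsUnit D0.det := hD0pos.det_pos.ne'.isUnit
  have hinv : D0⁻¹ * D0 = 1 := Matrix.nonsing_inv_mul D0 hdet
  have hinv' : D0 * D0⁻¹ = 1 := Matrix.mul_nonsing_inv D0 hdet
  have hinvT : D0⁻¹ᵀ = D0⁻¹ := by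
    rw [Matrix.transpose_nonsing_inv, hD0symm.eq]
  -- `sN2 * c i > 0` whenever `Ψ i ≠ 0`
  have hkey : ∀ i, Ψ i ≠ 0 → 0 < sN2 * c i := by
    intro i hi
    have h1 : 0 < Ψ i ⬝ᵥ Ψ i := by
      have h2 : Ψ i ⬝ᵥ Ψ i = ∑ j, (Ψ i j) ^ 2 := by
        simp [dotProduct, sq]
      rw [h2]
      apply Finset.sum_pos' (fun j _ => sq_nonneg _)
      obtain ⟨j, hj⟩ := Function.ne_iff.mp hi
      exact ⟨j, Finset.mem_univ _, sq_pos_of_ne_zero (by simpa using hj)⟩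
    have h3 := hN2 i (Ψ i)
    rw [abs_of_pos h1] at h3
    by_contra hcon
    push_neg at hcon
    have : sN2 * c i * Real.sqrt (∑ j, (D0.mulVec (Ψ i)) j ^ 2) ≤ 0 :=
      mul_nonpos_of_nonpos_of_nonneg hcon (Real.sqrt_nonneg _)
    linarith
  -- `sN2 > 0`
  have hsN2 : 0 < sN2 := by
    obtain ⟨j0⟩ := Fin.pos_iff_nonempty.mp hp
    set x : Fin p → ℝ := fun _ => 1 with hx
    have hx0 : x ≠ 0 := by
      intro h
      have := congrFun h j0
      simp [hx] at this
    have hpos : 0 < x ⬝ᵥ (D0 * D0).mulVec x := by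
      have hDx : D0.mulVec x ≠ 0 := by
        intro h
        apply hx0
        have : D0⁻¹.mulVec (D0.mulVec x) = D0⁻¹.mulVec 0 := by rw [h]
        rwa [Matrix.mulVec_mulVec, hinv, Matrix.one_mulVec, Matrix.mulVec_zero] at this
      have : x ⬝ᵥ (D0 * D0).mulVec x = (D0.mulVec x) ⬝ᵥ (D0.mulVec x) := by
        rw [← Matrix.mulVec_mulVec, Matrix.dotProduct_mulVec, ← Matrix.mulVec_transpose,
          hD0symm.eq]
      rw [this]
      have h2 : (D0.mulVec x) ⬝ᵥ (D0.mulVec x) = ∑ j, (D0.mulVec x j) ^ 2 := by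
        simp [dotProduct, sq]
      rw [h2]
      apply Finset.sum_pos' (fun j _ => sq_nonneg _)
      obtain ⟨j, hj⟩ := Function.ne_iff.mp hDx
      exact ⟨j, Finset.mem_univ _, sq_pos_of_ne_zero (by simpa using hj)⟩
    rw [hD0sq, bilin_sum] at hpos
    have hpos' : ∑ _i : Fin n, (0:ℝ) < ∑ i, c i * (Ψ i ⬝ᵥ x) * (Ψ i ⬝ᵥ x) := by
      simpa using hpos
    obtain ⟨i, _, hi⟩ := Finset.exists_lt_of_sum_lt hpos'
    have hci : 0 < c i := by nlinarith [sq_nonneg (Ψ i ⬝ᵥ x)]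
    have hΨ : Ψ i ≠ 0 := by
      intro h
      rw [h] at hi
      simp [zero_dotProduct] at hi
    nlinarith [hkey i hΨ]
  have hcpos : ∀ i, Ψ i ≠ 0 → 0 < c i := by
    intro i h
    rcases mul_pos_iff.mp (hkey i h) with ⟨_, h2⟩ | ⟨h1, _⟩
    · exact h2
    · linarith
  have hC0 : 0 ≤ L * r * sN2 := by positivity
  set M : Matrix (Fin p) (Fin p) ℝ :=
    (∑ i, e i • Matrix.vecMulVec (Ψ i) (Ψ i)) - D0 * D0 with hM
  have hMsum : M = ∑ i, (e i - c i) • Matrix.vecMulVec (Ψ i) (Ψ i) := by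
    rw [hM, hD0sq, ← Finset.sum_sub_distrib]
    exact Finset.sum_congr rfl fun i _ => (sub_smul _ _ _).symm
  -- the bilinear bound
  have hbilin : ∀ u : Fin p → ℝ,
      |u ⬝ᵥ (D0⁻¹ * M * D0⁻¹).mulVec v| ≤
        L * r * sN2 * Real.sqrt (∑ j, u j ^ 2) * Real.sqrt (∑ j, v j ^ 2) := by
    intro u
    set a : Fin p → ℝ := D0⁻¹.mulVec u with ha
    set b : Fin p → ℝ := D0⁻¹.mulVec v with hb
    -- step 1 : identify the bilinear form
    have hvecMul : ∀ x : Fin p → ℝ, x ᵥ* D0⁻¹ = D0⁻¹.mulVec x := by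
      intro x
      rw [← hinvT, Matrix.mulVec_transpose, hinvT]
    have hvecMulD0 : ∀ x : Fin p → ℝ, x ᵥ* D0 = D0.mulVec x := by
      intro x
      rw [← Matrix.mulVec_transpose, hD0symm.eq]
    have step1 : u ⬝ᵥ (D0⁻¹ * M * D0⁻¹).mulVec v
        = ∑ i, (e i - c i) * (Ψ i ⬝ᵥ a) * (Ψ i ⬝ᵥ b) := by
      rw [← Matrix.mulVec_mulVec, ← Matrix.mulVec_mulVec, Matrix.dotProduct_mulVec,
        hvecMul, ← ha, ← hb, hMsum, bilin_sum]
    -- step 2 : per-term bound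
    set A : Fin n → ℝ := fun i => Real.sqrt (c i) * |Ψ i ⬝ᵥ a| with hA
    set B : Fin n → ℝ := fun i => Real.sqrt (c i) * |Ψ i ⬝ᵥ b| with hB
    have step2 : ∀ i, |(e i - c i) * (Ψ i ⬝ᵥ a) * (Ψ i ⬝ᵥ b)| ≤
        L * r * sN2 * (A i * B i) := by
      intro i
      by_cases hΨi : Ψ i = 0
      · simp [hA, hB, hΨi, zero_dotProduct]
      · have hci : 0 < c i := hcpos i hΨi
        have h1 : |e i - c i| ≤ L * (sN2 * c i * r) := by
          have h2 := hL (Ψ i ⬝ᵥ υ) (Ψ i ⬝ᵥ υs)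
          have h3 : Ψ i ⬝ᵥ υ - Ψ i ⬝ᵥ υs = Ψ i ⬝ᵥ (υ - υs) := by
            rw [dotProduct_sub]
          have h4 := hN2 i (υ - υs)
          have h5 : sN2 * c i * Real.sqrt (∑ j, (D0.mulVec (υ - υs)) j ^ 2) ≤
              sN2 * c i * r := mul_le_mul_of_nonneg_left hloc (le_of_lt (hkey i hΨi))
          calc |e i - c i| ≤ L * |Ψ i ⬝ᵥ υ - Ψ i ⬝ᵥ υs| := h2
            _ ≤ L * (sN2 * c i * r) := by
                apply mul_le_mul_of_nonneg_left _ hL0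
                rw [h3]
                exact le_trans h4 h5
        calc |(e i - c i) * (Ψ i ⬝ᵥ a) * (Ψ i ⬝ᵥ b)|
            = |e i - c i| * |Ψ i ⬝ᵥ a| * |Ψ i ⬝ᵥ b| := by rw [abs_mul, abs_mul]
          _ ≤ (L * (sN2 * c i * r)) * |Ψ i ⬝ᵥ a| * |Ψ i ⬝ᵥ b| :=
              mul_le_mul_of_nonneg_right
                (mul_le_mul_of_nonneg_right h1 (abs_nonneg _)) (abs_nonneg _)
          _ = L * r * sN2 * (A i * B i) := by
              rw [hA, hB]
              simp only []
              rw [show Real.sqrt (c i) * |Ψ i ⬝ᵥ a| * (Real.sqrt (c i) * |Ψ i ⬝ᵥ b|)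
                  = (Real.sqrt (c i) * Real.sqrt (c i)) * (|Ψ i ⬝ᵥ a| * |Ψ i ⬝ᵥ b|) by ring,
                Real.mul_self_sqrt hci.le]
              ring
    -- step 3 : Cauchy-Schwarz
    have hAB : ∑ i, A i * B i ≤
        Real.sqrt (∑ i, A i ^ 2) * Real.sqrt (∑ i, B i ^ 2) := by
      have h1 := Finset.sum_mul_sq_le_sq_mul_sq Finset.univ A B
      have h2 : (0:ℝ) ≤ ∑ i, A i * B i :=
        Finset.sum_nonneg fun i _ => mul_nonneg
          (mul_nonneg (Real.sqrt_nonneg _) (abs_nonneg _))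
          (mul_nonneg (Real.sqrt_nonneg _) (abs_nonneg _))
      calc ∑ i, A i * B i = Real.sqrt ((∑ i, A i * B i) ^ 2) := (Real.sqrt_sq h2).symm
        _ ≤ Real.sqrt ((∑ i, A i ^ 2) * ∑ i, B i ^ 2) := Real.sqrt_le_sqrt h1
        _ = Real.sqrt (∑ i, A i ^ 2) * Real.sqrt (∑ i, B i ^ 2) :=
            Real.sqrt_mul (Finset.sum_nonneg fun i _ => sq_nonneg _) _
    -- step 4 : identify the norms
    have norm_eq : ∀ (x y : Fin p → ℝ), y = D0⁻¹.mulVec x →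
        ∑ i, (fun i => Real.sqrt (c i) * |Ψ i ⬝ᵥ y|) i ^ 2 = ∑ j, x j ^ 2 := by
      intro x y hy
      have h1 : ∀ i, (Real.sqrt (c i) * |Ψ i ⬝ᵥ y|) ^ 2 = c i * (Ψ i ⬝ᵥ y) * (Ψ i ⬝ᵥ y) := by
        intro i
        by_cases hΨi : Ψ i = 0
        · simp [hΨi, zero_dotProduct]
        · rw [mul_pow, Real.sq_sqrt (hcpos i hΨi).le, sq_abs, sq]
          ring
      simp only [h1]
      have h2 := bilin_sum Ψ c y y
      rw [← hD0sq] at h2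
      rw [← h2, hy, Matrix.mulVec_mulVec]
      have h3 : D0 * D0 * D0⁻¹ = D0 := by
        rw [mul_assoc, hinv', mul_one]
      rw [h3, Matrix.dotProduct_mulVec, hvecMulD0, Matrix.mulVec_mulVec, hinv',
        Matrix.one_mulVec]
      simp [dotProduct, sq]
    have hAnorm : ∑ i, A i ^ 2 = ∑ j, u j ^ 2 := norm_eq u a ha
    have hBnorm : ∑ i, B i ^ 2 = ∑ j, v j ^ 2 := norm_eq v b hb
    -- combine
    calc |u ⬝ᵥ (D0⁻¹ * M * D0⁻¹).mulVec v|
        = |∑ i, (e i - c i) * (Ψ i ⬝ᵥ a) * (Ψ i ⬝ᵥ b)| := by rw [step1]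
      _ ≤ ∑ i, |(e i - c i) * (Ψ i ⬝ᵥ a) * (Ψ i ⬝ᵥ b)| := Finset.abs_sum_le_sum_abs _ _
      _ ≤ ∑ i, L * r * sN2 * (A i * B i) := Finset.sum_le_sum fun i _ => step2 i
      _ = L * r * sN2 * ∑ i, A i * B i := by rw [← Finset.mul_sum]
      _ ≤ L * r * sN2 * (Real.sqrt (∑ i, A i ^ 2) * Real.sqrt (∑ i, B i ^ 2)) :=
          mul_le_mul_of_nonneg_left hAB hC0
      _ = L * r * sN2 * Real.sqrt (∑ j, u j ^ 2) * Real.sqrt (∑ j, v j ^ 2) := by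
          rw [hAnorm, hBnorm]; ring
  -- conclude via `u := (D0⁻¹ M D0⁻¹) v`
  set w : Fin p → ℝ := (D0⁻¹ * M * D0⁻¹).mulVec v with hw
  have hsum : (0:ℝ) ≤ ∑ j, w j ^ 2 := Finset.sum_nonneg fun j _ => sq_nonneg _
  set s : ℝ := Real.sqrt (∑ j, w j ^ 2) with hs
  set K : ℝ := L * r * sN2 * Real.sqrt (∑ j, v j ^ 2) with hK
  have hK0 : 0 ≤ K := by positivity
  have hs0 : 0 ≤ s := Real.sqrt_nonneg _
  have hww : w ⬝ᵥ w = s ^ 2 := by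
    rw [hs, Real.sq_sqrt hsum]
    simp [dotProduct, sq]
  have hfin := hbilin w
  rw [show w ⬝ᵥ (D0⁻¹ * M * D0⁻¹).mulVec v = w ⬝ᵥ w from rfl, hww] at hfin
  have hfin' : s ^ 2 ≤ K * s := by
    calc s ^ 2 = |s ^ 2| := (abs_of_nonneg (sq_nonneg _)).symm
      _ ≤ L * r * sN2 * Real.sqrt (∑ j, w j ^ 2) * Real.sqrt (∑ j, v j ^ 2) := hfin
      _ = K * s := by rw [hK, hs]; ring
  show s ≤ K
  nlinarith [hfin', hK0, hs0]
end
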